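/- The rank-minimizing mechanism is not obviously manipulable: for every agent i of any type ≻_i and every misreport ≻_i′ ≠ ≻_i, (i) the worst-case true rank of i's assignment under truthful reporting (maximized over counterpart profiles and over allocations in the output set) is weakly less than or equal to that under the misreport, and (ii) the best-case true rank under truthful reporting (minimized over counterpart profiles and allocations) is weakly less than or equal to that under the misreport. -/

import Mathlib

open Finset

/-- A strict preference over `M` objects, encoded as a bijection sending each
object to its 0-based rank position (position 0 = favorite). -/
abbrev Pref (M : ℕ) := Fin M ≃ Fin M

/-- The (1-based) rank of object `o` under preference `p`: the favorite object
has rank 1, the second favorite rank 2, etc. -/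
def rank {M : ℕ} (p : Pref M) (o : Fin M) : ℕ := (p o : ℕ) + 1

/-- `α : Fin N → Fin M` is a capacity-respecting allocation for capacities `q`. -/
def IsAlloc {N M : ℕ} (q : Fin M → ℕ) (α : Fin N → Fin M) : Prop :=
  ∀ o : Fin M, (univ.filter (fun i => α i = o)).card ≤ q o

/-- The total (summed) rank of allocation `α` at preference profile `pref`. -/
def totalRank {N M : ℕ} (pref : Fin N → Pref M) (α : Fin N → Fin M) : ℕ :=
  ∑ i, rank (pref i) (α i)

/-- The average rank of allocation `α` at preference profile `pref`. -/
def avgRank {N M : ℕ} (pref : Fin N → Pref M) (α : Fin N → Fin M) : ℚ :=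
  (totalRank pref α : ℚ) / N

/-- The rank-minimizing mechanism: the set of all capacity-respecting
allocations minimizing the average rank at the reported profile. -/
def RM {N M : ℕ} (q : Fin M → ℕ) (pref : Fin N → Pref M) : Set (Fin N → Fin M) :=
  {α | IsAlloc q α ∧ ∀ β : Fin N → Fin M, IsAlloc q β → avgRank pref α ≤ avgRank pref β}

/-- Total capacity of the `k` most-preferred objects under preference `p`. -/
def topCap {M : ℕ} (q : Fin M → ℕ) (p : Pref M) (k : ℕ) : ℕ :=
  ∑ o ∈ univ.filter (fun o => (p o : ℕ) < k), q o

lemma myrank_le {M : ℕ} (p : Pref M) (o : Fin M) : rank p o ≤ M := by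
  have := (p o).isLt; unfold rank; omega
lemma fiber_card_le {N M : ℕ} (q : Fin M → ℕ) (g : Fin N ↪ (Σ o : Fin M, Fin (q o)))
    (o : Fin M) : (univ.filter (fun j => (g j).1 = o)).card ≤ q o := by
  calc (univ.filter (fun j => (g j).1 = o)).card
      ≤ (Finset.range (q o)).card := by
        refine Finset.card_le_card_of_injOn (fun j => ((g j).2 : ℕ)) ?_ ?_
        · intro j hj
          have h1 : (g j).1 = o := (mem_filter.mp hj).2
          have h2 := (g j).2.isLt
          rw [Finset.mem_coe, Finset.mem_range, ← h1]
          exact h2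
        · intro j hj j' hj' hval
          have h1 : (g j).1 = o := (mem_filter.mp hj).2
          have h1' : (g j').1 = o := (mem_filter.mp hj').2
          apply g.injective
          refine Sigma.ext (h1.trans h1'.symm) ?_
          rw [Fin.heq_ext_iff (by rw [h1, h1'])]
          exact hval
    _ = q o := by simp
lemma exists_alloc {N M : ℕ} (q : Fin M → ℕ) (hq : N ≤ ∑ o, q o) :
    ∃ α : Fin N → Fin M, IsAlloc q α := by
  have hcard : Fintype.card (Fin N) ≤ Fintype.card (Σ o : Fin M, Fin (q o)) := by
    simp [Fintype.card_sigma, hq]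
  obtain ⟨g⟩ := Function.Embedding.nonempty_of_card_le hcard
  exact ⟨fun j => (g j).1, fun o => fiber_card_le q g o⟩
lemma exists_iota {N M : ℕ} (q : Fin M → ℕ) (hq : N ≤ ∑ o, q o)
    (hq1 : ∀ o, 1 ≤ q o) (i : Fin N) (S : Finset (Fin M)) (odag : Fin M) (ho : odag ∉ S)
    (hS : ∑ o ∈ S, q o + 1 ≤ N) :
    ∃ ι : Fin N → Fin M, IsAlloc q ι ∧ ι i = odag ∧
      ∀ o ∈ S, (univ.filter (fun j => ι j = o)).card = q o := by
  classical
  set D := (Σ o : Fin M, Fin (q o)) with hD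
  set T := ∑ o ∈ S, q o with hT
  set Q := ∑ o, q o with hQ
  have hQcard : Fintype.card D = Q := by simp [hD, hQ]
  set sdag : D := ⟨odag, ⟨0, hq1 odag⟩⟩ with hsdag
  -- card of S-slots
  have hfilt : (univ.filter (fun s : D => s.1 ∈ S)) = S.sigma (fun o => univ) := by
    ext ⟨o, t⟩
    rw [Finset.mem_sigma]
    simp
  have hDScard : Fintype.card {s : D // s.1 ∈ S} = T := by
    rw [Fintype.card_subtype, hfilt, Finset.card_sigma]
    simp [hT]
  have hDRcard : Fintype.card {s : D // s.1 ∉ S ∧ s ≠ sdag} = Q - T - 1 := by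
    rw [Fintype.card_subtype]
    have : (univ.filter (fun s : D => s.1 ∉ S ∧ s ≠ sdag))
        = (univ.filter (fun s : D => s.1 ∉ S)).erase sdag := by
      ext s
      simp only [Finset.mem_erase, Finset.mem_filter, Finset.mem_univ, true_and]
      tauto
    rw [this, Finset.card_erase_of_mem (by simp [hsdag, ho]), Finset.filter_not,
      Finset.card_sdiff_of_subset (Finset.filter_subset _ _), hfilt, Finset.card_sigma]
    simp only [Finset.card_univ, Fintype.card_fin, ← hT, Finset.card_univ, hQcard]
  -- build the embedding pieces
  have hAcard : Fintype.card {j : Fin N // j ≠ i} = N - 1 := by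
    rw [Fintype.card_subtype, Finset.filter_ne', Finset.card_erase_of_mem (mem_univ i),
      Finset.card_univ, Fintype.card_fin]
  have hsplit : N - 1 = T + (N - 1 - T) := by omega
  let eA : {j : Fin N // j ≠ i} ≃ Fin (N - 1) := Fintype.equivFinOfCardEq hAcard
  let esplit : Fin (N - 1) ≃ Fin T ⊕ Fin (N - 1 - T) :=
    (finCongr hsplit).trans finSumFinEquiv.symm
  let eS : Fin T ≃ {s : D // s.1 ∈ S} := (Fintype.equivFinOfCardEq hDScard).symm
  have hRle : Fintype.card (Fin (N - 1 - T)) ≤ Fintype.card {s : D // s.1 ∉ S ∧ s ≠ sdag} := by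
    rw [Fintype.card_fin, hDRcard]; omega
  obtain ⟨eR⟩ := Function.Embedding.nonempty_of_card_le hRle
  let g : Fin N → D := fun j =>
    if h : j = i then sdag
    else Sum.elim (fun a => (eS a : D)) (fun b => (eR b : D)) (esplit (eA ⟨j, h⟩))
  have hgi : g i = sdag := dif_pos rfl
  have hgval : ∀ (j : Fin N) (h : j ≠ i),
      g j = Sum.elim (fun a => (eS a : D)) (fun b => (eR b : D)) (esplit (eA ⟨j, h⟩)) :=
    fun j h => dif_neg h
  have ginj : Function.Injective g := by
    intro j1 j2 hg
    by_cases h1 : j1 = i <;> by_cases h2 : j2 = i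
    · rw [h1, h2]
    · exfalso
      rw [h1, hgi, hgval j2 h2] at hg
      rcases hx : esplit (eA ⟨j2, h2⟩) with a | b <;>
        rw [hx] at hg <;> simp only [Sum.elim_inl, Sum.elim_inr] at hg
      · exact ho (by rw [hsdag] at hg; rw [show odag = ((eS a : D)).1 from congrArg Sigma.fst hg]; exact (eS a).2)
      · exact (eR b).2.2 hg.symm
    · exfalso
      rw [h2, hgi, hgval j1 h1] at hg
      rcases hx : esplit (eA ⟨j1, h1⟩) with a | b <;>
        rw [hx] at hg <;> simp only [Sum.elim_inl, Sum.elim_inr] at hg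
      · exact ho (by rw [show odag = ((eS a : D)).1 from (congrArg Sigma.fst hg).symm]; exact (eS a).2)
      · exact (eR b).2.2 hg
    · rw [hgval j1 h1, hgval j2 h2] at hg
      have key : esplit (eA ⟨j1, h1⟩) = esplit (eA ⟨j2, h2⟩) := by
        rcases hx : esplit (eA ⟨j1, h1⟩) with a | b <;>
          rcases hy : esplit (eA ⟨j2, h2⟩) with a' | b' <;>
            rw [hx, hy] at hg <;> simp only [Sum.elim_inl, Sum.elim_inr] at hg
        · rw [Sum.inl.injEq]
          exact eS.injective (Subtype.coe_injective hg)
        · exact absurd (hg ▸ (eS a).2) (eR b').2.1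
        · exact absurd (hg.symm ▸ (eS a').2) (eR b).2.1
        · rw [Sum.inr.injEq]
          exact eR.injective (Subtype.coe_injective hg)
      have h3 := eA.injective (esplit.injective key)
      exact congrArg Subtype.val h3
  have hgj : ∀ (o : Fin M) (hoS : o ∈ S) (t : Fin (q o)),
      g (eA.symm (esplit.symm (Sum.inl (eS.symm ⟨⟨o, t⟩, hoS⟩)))).1 = ⟨o, t⟩ := by
    intro o hoS t
    set jt := eA.symm (esplit.symm (Sum.inl (eS.symm ⟨⟨o, t⟩, hoS⟩))) with hjt
    rw [hgval jt.1 jt.2]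
    have heta : (⟨jt.1, jt.2⟩ : {j : Fin N // j ≠ i}) = jt := rfl
    rw [heta, hjt, Equiv.apply_symm_apply, Equiv.apply_symm_apply]
    simp only [Sum.elim_inl, Equiv.apply_symm_apply]
  refine ⟨fun j => (g j).1, fun o => fiber_card_le q ⟨g, ginj⟩ o, by show (g i).1 = odag; rw [hgi], ?_⟩
  intro o hoS
  refine le_antisymm (fiber_card_le q ⟨g, ginj⟩ o) ?_
  have hcq : q o = (univ : Finset (Fin (q o))).card := by simp
  rw [hcq]
  refine Finset.card_le_card_of_injOn
    (fun t => (eA.symm (esplit.symm (Sum.inl (eS.symm ⟨⟨o, t⟩, hoS⟩)))).1) ?_ ?_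
  · intro t _
    rw [Finset.mem_coe, Finset.mem_filter]
    refine ⟨mem_univ _, ?_⟩
    show (g (eA.symm (esplit.symm (Sum.inl (eS.symm ⟨⟨o, t⟩, hoS⟩)))).1).1 = o
    rw [hgj o hoS t]
  · intro t _ t' _ hval
    simp only at hval
    have h1 := hgj o hoS t
    have h2 := hgj o hoS t'
    rw [hval, h2] at h1
    have := congrArg (fun s : ((o : Fin M) × Fin (q o)) => (s.2 : ℕ)) h1
    exact Fin.ext this.symm
lemma mem_RM_iff {N M : ℕ} (hN : 0 < N) (q : Fin M → ℕ) (pref : Fin N → Pref M)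
    (α : Fin N → Fin M) :
    α ∈ RM q pref ↔ IsAlloc q α ∧
      ∀ β, IsAlloc q β → totalRank pref α ≤ totalRank pref β := by
  have hN' : (0:ℚ) < N := by exact_mod_cast hN
  unfold RM avgRank
  simp only [Set.mem_setOf_eq, div_le_div_iff_of_pos_right hN', Nat.cast_le]
lemma card_filter_mem {N M : ℕ} (α : Fin N → Fin M) (S : Finset (Fin M)) :
    (univ.filter (fun j => α j ∈ S)).card
      = ∑ o ∈ S, (univ.filter (fun j => α j = o)).card := by
  rw [Finset.card_eq_sum_card_fiberwise (s := univ.filter (fun j => α j ∈ S)) (f := α) (t := S) (fun x hx => (mem_filter.mp hx).2)]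
  refine Finset.sum_congr rfl fun o ho => ?_
  congr 1
  ext j
  simp only [mem_filter, mem_univ, true_and, and_iff_right_iff_imp]
  intro h; rw [h]; exact ho
lemma construction {N M : ℕ} (q : Fin M → ℕ) (hq : N ≤ ∑ o, q o) (hq1 : ∀ o, 1 ≤ q o)
    (i : Fin N) (p ρ : Pref M) (k : ℕ) (hk : topCap q p k + 1 ≤ N) :
    ∃ (pref : Fin N → Pref M) (α : Fin N → Fin M), pref i = ρ ∧ α ∈ RM q pref ∧
      k ≤ (p (α i) : ℕ) ∧ ∀ o : Fin M, k ≤ (p o : ℕ) → (ρ (α i) : ℕ) ≤ (ρ o : ℕ) := by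
  classical
  have hN : 0 < N := by omega
  set S : Finset (Fin M) := univ.filter (fun o => (p o : ℕ) < k) with hSdef
  have hT : ∑ o ∈ S, q o = topCap q p k := rfl
  set F : Finset (Fin M) := univ.filter (fun o => k ≤ (p o : ℕ)) with hFdef
  have hF : F.Nonempty := by
    rw [Finset.filter_nonempty_iff]
    by_contra h
    push_neg at h
    have hSuniv : S = univ := by
      ext o
      simp only [hSdef, mem_filter, mem_univ, true_and, iff_true]
      have := h o (mem_univ o)
      omega
    rw [hSuniv] at hT
    have := hT ▸ hq
    omega
  obtain ⟨odag, hodagF, hodagmin⟩ := F.exists_min_image (fun o => (ρ o : ℕ)) hF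
  have hkodag : k ≤ (p odag : ℕ) := (mem_filter.mp hodagF).2
  have hodagS : odag ∉ S := by
    simp only [hSdef, mem_filter, mem_univ, true_and]
    omega
  obtain ⟨ι, hιA, hιi, hιfull⟩ := exists_iota q hq hq1 i S odag hodagS (hT ▸ hk)
  -- k < M and card S ≤ k and ρ odag ≤ k
  have hcardS : S.card ≤ k := by
    calc S.card ≤ (Finset.range k).card := by
          refine Finset.card_le_card_of_injOn (fun o => (p o : ℕ)) ?_ ?_
          · intro o hoS
            rw [Finset.mem_coe, Finset.mem_range]
            exact (mem_filter.mp hoS).2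
          · intro o _ o' _ h
            exact p.injective (Fin.ext h)
      _ = k := Finset.card_range k
  have hkM : k < M := by
    rcases hF with ⟨o, hoF⟩
    have := (mem_filter.mp hoF).2
    have := (p o).isLt
    omega
  have hρodag : (ρ odag : ℕ) ≤ k := by
    set B0 : Finset (Fin M) := univ.filter (fun o => (ρ o : ℕ) ≤ k) with hB0def
    have hcardB0 : k + 1 ≤ B0.card := by
      calc k + 1 = (univ : Finset (Fin (k+1))).card := by simp
        _ ≤ B0.card := by
            refine Finset.card_le_card_of_injOn
              (fun x => ρ.symm ⟨(x : ℕ), by omega⟩) ?_ ?_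
            · intro x _
              simp only [Finset.mem_coe, hB0def, mem_filter, mem_univ, true_and, Equiv.apply_symm_apply]
              exact Nat.lt_succ_iff.mp x.isLt
            · intro x _ x' _ h
              have h2 := ρ.symm.injective h
              have h3 := congrArg (Fin.val (n := M)) h2
              exact Fin.ext h3
    have : ¬ B0 ⊆ S := fun hsub => by
      have := Finset.card_le_card hsub
      omega
    rw [Finset.not_subset] at this
    obtain ⟨o₁, ho₁B, ho₁S⟩ := this
    have hko₁ : k ≤ (p o₁ : ℕ) := by
      simp only [hSdef, mem_filter, mem_univ, true_and] at ho₁S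
      omega
    have h1 : (ρ odag : ℕ) ≤ (ρ o₁ : ℕ) := hodagmin o₁ (by
      simp only [hFdef, mem_filter, mem_univ, true_and]; exact hko₁)
    have h2 : (ρ o₁ : ℕ) ≤ k := (mem_filter.mp ho₁B).2
    omega
  -- the preference profile
  have hM0 : 0 < M := lt_of_le_of_lt (Nat.zero_le k) hkM
  set z : Fin M := ⟨0, hM0⟩ with hzdef
  set pref : Fin N → Pref M := fun j =>
    if j = i then ρ else (p.trans (Equiv.swap z (p (ι j)))) with hprefdef
  have hprefi : pref i = ρ := if_pos rfl
  have hprefj : ∀ j, j ≠ i → rank (pref j) (ι j) = 1 := by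
    intro j hj
    simp only [rank, hprefdef, if_neg hj, Equiv.trans_apply, Equiv.swap_apply_right, hzdef]
  have hprefjS : ∀ j, j ≠ i → (p (ι j) : ℕ) < k → ∀ o : Fin M, k ≤ (p o : ℕ) →
      k + 1 ≤ rank (pref j) o := by
    intro j hj hjS o ho
    have h0 : p o ≠ z := by
      intro h
      rw [h, hzdef] at ho
      simp at ho
      omega
    have h1 : p o ≠ p (ι j) := by
      intro h
      rw [h] at ho
      omega
    simp only [hprefdef, if_neg hj, rank, Equiv.trans_apply,
      Equiv.swap_apply_of_ne_of_ne h0 h1]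
    omega
  refine ⟨pref, ι, hprefi, ?_, ?_, ?_⟩
  · rw [mem_RM_iff hN]
    refine ⟨hιA, fun β hβ => ?_⟩
    have htα : totalRank pref ι = rank ρ odag + (N - 1) := by
      unfold totalRank
      rw [← Finset.add_sum_erase univ _ (mem_univ i)]
      congr 1
      · rw [hprefi, hιi]
      · rw [Finset.sum_congr rfl (fun j hj => hprefj j (Finset.ne_of_mem_erase hj))]
        simp [Finset.card_erase_of_mem]
    have htβ : totalRank pref β
        = rank ρ (β i) + ∑ j ∈ univ.erase i, rank (pref j) (β j) := by
      unfold totalRank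
      rw [← Finset.add_sum_erase univ _ (mem_univ i), hprefi]
    have hN1 : (univ.erase i).card = N - 1 := by
      rw [Finset.card_erase_of_mem (mem_univ i)]; simp
    by_cases hc : k ≤ (p (β i) : ℕ)
    · have h1 : rank ρ odag ≤ rank ρ (β i) := by
        have := hodagmin (β i) (by simp only [hFdef, mem_filter, mem_univ, true_and]; exact hc)
        unfold rank; omega
      have h2 : N - 1 ≤ ∑ j ∈ univ.erase i, rank (pref j) (β j) := by
        calc N - 1 = ∑ _j ∈ univ.erase i, 1 := by rw [Finset.sum_const, hN1]; simp
          _ ≤ _ := Finset.sum_le_sum (fun j _ => by unfold rank; omega)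
      rw [htα, htβ]
      exact add_le_add h1 h2
    · push_neg at hc
      set A := univ.filter (fun j : Fin N => (p (ι j) : ℕ) < k) with hAdef
      set B := univ.filter (fun j : Fin N => (p (β j) : ℕ) < k) with hBdef
      have hAcard : A.card = topCap q p k := by
        have hA2 : A = univ.filter (fun j => ι j ∈ S) := by
          ext j
          simp [hAdef, hSdef]
        rw [hA2, card_filter_mem ι S, ← hT]
        exact Finset.sum_congr rfl (fun o ho => hιfull o ho)
      have hBcard : B.card ≤ topCap q p k := by
        have hB2 : B = univ.filter (fun j => β j ∈ S) := by
          ext j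
          simp [hBdef, hSdef]
        rw [hB2, card_filter_mem β S, ← hT]
        exact Finset.sum_le_sum (fun o _ => hβ o)
      have hiB : i ∈ B := by
        simp only [hBdef, mem_filter, mem_univ, true_and]
        exact hc
      have hiA : i ∉ A := by
        simp only [hAdef, mem_filter, mem_univ, true_and, hιi]
        omega
      have hex : ∃ j₀ ∈ A, j₀ ∉ B := by
        by_contra h
        push_neg at h
        have hsub : A ⊆ B := fun x hx => h x hx
        have hAB : A = B := Finset.eq_of_subset_of_card_le hsub (by omega)
        rw [hAB] at hiA
        exact hiA hiB
      obtain ⟨j₀, hj₀A, hj₀B⟩ := hex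
      have hj₀i : j₀ ≠ i := fun h => hiA (h ▸ hj₀A)
      have hj₀S : (p (ι j₀) : ℕ) < k := (mem_filter.mp hj₀A).2
      have hj₀β : k ≤ (p (β j₀) : ℕ) := by
        simp only [hBdef, mem_filter, mem_univ, true_and] at hj₀B
        omega
      have hrankj₀ : k + 1 ≤ rank (pref j₀) (β j₀) := hprefjS j₀ hj₀i hj₀S (β j₀) hj₀β
      have hsum : (N - 2) + (k + 1) ≤ ∑ j ∈ univ.erase i, rank (pref j) (β j) := by
        have hj₀mem : j₀ ∈ univ.erase i := Finset.mem_erase.mpr ⟨hj₀i, mem_univ _⟩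
        rw [← Finset.add_sum_erase _ _ hj₀mem]
        have hrest : N - 2 ≤ ∑ j ∈ (univ.erase i).erase j₀, rank (pref j) (β j) := by
          calc N - 2 = ((univ.erase i).erase j₀).card := by
                rw [Finset.card_erase_of_mem hj₀mem, hN1]
                omega
            _ = ∑ _j ∈ (univ.erase i).erase j₀, 1 := by rw [Finset.sum_const]; simp
            _ ≤ _ := Finset.sum_le_sum (fun j _ => by unfold rank; omega)
        omega
      rw [htα, htβ]
      have h1 : rank ρ odag ≤ k + 1 := by unfold rank; omega
      have h2 : 1 ≤ rank ρ (β i) := by unfold rank; omega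
      omega
  · rw [hιi]
    exact hkodag
  · intro o ho
    rw [hιi]
    exact hodagmin o (by simp only [hFdef, mem_filter, mem_univ, true_and]; exact ho)
lemma rm_nonempty {N M : ℕ} (q : Fin M → ℕ) (hN : 0 < N) (hq : N ≤ ∑ o, q o)
    (pref : Fin N → Pref M) : (RM q pref).Nonempty := by
  classical
  obtain ⟨α₀, hα₀⟩ := exists_alloc q hq
  obtain ⟨α, hαmem, hαmin⟩ := Finset.exists_min_image
    (univ.filter (fun α : Fin N → Fin M => IsAlloc q α)) (totalRank pref)
    ⟨α₀, by simp [hα₀]⟩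
  refine ⟨α, (mem_RM_iff hN q pref α).mpr ⟨(mem_filter.mp hαmem).2, fun β hβ => ?_⟩⟩
  exact hαmin β (by simp [hβ])
lemma truthful_upper {N M : ℕ} (q : Fin M → ℕ) (hN : 0 < N) (p : Pref M) (K : ℕ)
    (hK : N ≤ topCap q p K) (pref : Fin N → Pref M) (i : Fin N) (hpi : pref i = p)
    (α : Fin N → Fin M) (hα : α ∈ RM q pref) : rank p (α i) ≤ K := by
  classical
  rw [mem_RM_iff hN] at hα
  obtain ⟨hαA, hαmin⟩ := hα
  by_contra hcon
  push_neg at hcon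
  have hKi : K ≤ (p (α i) : ℕ) := by unfold rank at hcon; omega
  have hfull : ∀ o : Fin M, (p o : ℕ) < K →
      (univ.filter (fun j => α j = o)).card = q o := by
    intro o ho
    by_contra hne
    have hlt : (univ.filter (fun j => α j = o)).card < q o :=
      lt_of_le_of_ne (hαA o) hne
    set β := Function.update α i o with hβdef
    have hβA : IsAlloc q β := by
      intro o'
      by_cases h : o' = o
      · subst h
        have hsub : univ.filter (fun j => β j = o') ⊆ insert i (univ.filter (fun j => α j = o')) := by
          intro j hj
          rcases eq_or_ne j i with h' | h'
          · exact Finset.mem_insert.mpr (Or.inl h')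
          · refine Finset.mem_insert.mpr (Or.inr ?_)
            rw [mem_filter] at hj ⊢
            rwa [hβdef, Function.update_of_ne h'] at hj
        calc (univ.filter (fun j => β j = o')).card
            ≤ (insert i (univ.filter (fun j => α j = o'))).card := Finset.card_le_card hsub
          _ ≤ (univ.filter (fun j => α j = o')).card + 1 := Finset.card_insert_le _ _
          _ ≤ q o' := hlt
      · have hsub : univ.filter (fun j => β j = o') ⊆ univ.filter (fun j => α j = o') := by
          intro j hj
          rw [mem_filter] at hj ⊢
          rcases eq_or_ne j i with h' | h'
          · exfalso
            rw [h', hβdef, Function.update_self] at hj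
            exact h hj.2.symm
          · rwa [hβdef, Function.update_of_ne h'] at hj
        exact le_trans (Finset.card_le_card hsub) (hαA o')
    have hlt2 : totalRank pref β < totalRank pref α := by
      unfold totalRank
      rw [← Finset.add_sum_erase univ _ (mem_univ i),
        ← Finset.add_sum_erase univ (fun j => rank (pref j) (α j)) (mem_univ i)]
      have hsame : ∑ j ∈ univ.erase i, rank (pref j) (β j)
          = ∑ j ∈ univ.erase i, rank (pref j) (α j) := by
        refine Finset.sum_congr rfl fun j hj => ?_
        rw [hβdef, Function.update_of_ne (Finset.ne_of_mem_erase hj)]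
      rw [hsame]
      have : rank (pref i) (β i) < rank (pref i) (α i) := by
        rw [hβdef, Function.update_self, hpi]
        unfold rank
        omega
      omega
    exact absurd (hαmin β hβA) (by omega)
  have hcount : N ≤ (univ.filter (fun j : Fin N =>
      α j ∈ univ.filter (fun o : Fin M => (p o : ℕ) < K))).card := by
    rw [card_filter_mem α]
    calc N ≤ topCap q p K := hK
      _ = ∑ o ∈ univ.filter (fun o : Fin M => (p o : ℕ) < K), (univ.filter (fun j => α j = o)).card := by
          exact (Finset.sum_congr rfl fun o ho => (hfull o (mem_filter.mp ho).2).symm)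
  have hsub : (univ.filter (fun j : Fin N =>
      α j ∈ univ.filter (fun o : Fin M => (p o : ℕ) < K))) ⊆ univ.erase i := by
    intro j hj
    rw [mem_filter, mem_filter] at hj
    refine Finset.mem_erase.mpr ⟨?_, mem_univ _⟩
    intro h
    rw [h] at hj
    omega
  have := Finset.card_le_card hsub
  rw [Finset.card_erase_of_mem (mem_univ i), Finset.card_univ, Fintype.card_fin] at this
  omega

/-- Worst-case (true) rank of agent `i` (with true preference `truth`) when she
reports `report`, over all counterpart profiles and all allocations returned by
the rank-minimizing mechanism. -/
noncomputable def worstCase {N M : ℕ} (q : Fin M → ℕ) (i : Fin N)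
    (truth report : Pref M) : ℕ :=
  sSup {r | ∃ pref : Fin N → Pref M, pref i = report ∧
    ∃ α ∈ RM q pref, r = rank truth (α i)}

/-- Best-case (true) rank of agent `i` (with true preference `truth`) when she
reports `report`, over all counterpart profiles and all allocations returned by
the rank-minimizing mechanism. -/
noncomputable def bestCase {N M : ℕ} (q : Fin M → ℕ) (i : Fin N)
    (truth report : Pref M) : ℕ :=
  sInf {r | ∃ pref : Fin N → Pref M, pref i = report ∧
    ∃ α ∈ RM q pref, r = rank truth (α i)}

/-- Theorem 1: the rank-minimizing mechanism is not obviously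
manipulable: no misreport strictly improves the worst-case or the best-case
true rank over truthful reporting. -/
theorem rm_not_obviously_manipulable {N M : ℕ} (q : Fin M → ℕ)
    (hq : N ≤ ∑ o, q o) (hq1 : ∀ o, 1 ≤ q o)
    (i : Fin N) (p p' : Pref M) (hne : p' ≠ p) :
    worstCase q i p p ≤ worstCase q i p p' ∧
    bestCase q i p p ≤ bestCase q i p p' := by
  classical
  have hN : 0 < N := i.pos
  have hM0 : 0 < M := by
    by_contra h
    push_neg at h
    interval_cases M
    simp at hq
    omega
  -- generic facts about the outcome sets
  set outSet : Pref M → Set ℕ := fun report =>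
    {r | ∃ pref : Fin N → Pref M, pref i = report ∧
      ∃ α ∈ RM q pref, r = rank p (α i)} with houtSet
  have hout_ne : ∀ report : Pref M, (outSet report).Nonempty := by
    intro report
    obtain ⟨α, hα⟩ := rm_nonempty q hN hq (fun _ => report)
    exact ⟨rank p (α i), ⟨fun _ => report, rfl, α, hα, rfl⟩⟩
  have hout_bdd : ∀ report : Pref M, BddAbove (outSet report) := by
    intro report
    refine ⟨M, fun r hr => ?_⟩
    obtain ⟨pref, _, α, _, rfl⟩ := hr
    exact myrank_le p (α i)
  have hout_pos : ∀ (report : Pref M) (r : ℕ), r ∈ outSet report → 1 ≤ r := by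
    intro report r hr
    obtain ⟨pref, _, α, _, rfl⟩ := hr
    unfold rank
    omega
  -- the critical rank K
  have hex : ∃ k, N ≤ topCap q p k := by
    refine ⟨M, ?_⟩
    unfold topCap
    have : univ.filter (fun o : Fin M => (p o : ℕ) < M) = univ := by
      ext o
      simp [(p o).isLt]
    rw [this]
    exact hq
  set K := Nat.find hex with hKdef
  have hKspec : N ≤ topCap q p K := Nat.find_spec hex
  have hK0 : 0 < K := by
    rcases Nat.eq_zero_or_pos K with h | h
    · exfalso
      rw [h] at hKspec
      unfold topCap at hKspec
      have : univ.filter (fun o : Fin M => (p o : ℕ) < 0) = ∅ := by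
        ext o; simp
      rw [this] at hKspec
      simp at hKspec
      omega
    · exact h
  have hKpred : topCap q p (K - 1) + 1 ≤ N := by
    have := Nat.find_min hex (m := K - 1) (by omega)
    omega
  constructor
  · -- worst case
    show sSup (outSet p) ≤ sSup (outSet p')
    have hub : sSup (outSet p) ≤ K := by
      refine csSup_le (hout_ne p) fun r hr => ?_
      obtain ⟨pref, hpi, α, hα, rfl⟩ := hr
      exact truthful_upper q hN p K hKspec pref i hpi α hα
    have hlb : K ≤ sSup (outSet p') := by
      obtain ⟨pref, α, hpi, hαRM, hKα, _⟩ :=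
        construction q hq hq1 i p p' (K - 1) hKpred
      refine le_trans ?_ (le_csSup (hout_bdd p') (⟨pref, hpi, α, hαRM, rfl⟩ :
        rank p (α i) ∈ outSet p'))
      unfold rank
      omega
    omega
  · -- best case
    show sInf (outSet p) ≤ sInf (outSet p')
    have h1 : sInf (outSet p) ≤ 1 := by
      obtain ⟨pref, α, hpi, hαRM, _, hmin⟩ :=
        construction q hq hq1 i p p 0 (by
          have : topCap q p 0 = 0 := by
            unfold topCap
            have : univ.filter (fun o : Fin M => (p o : ℕ) < 0) = ∅ := by
              ext o; simp
            rw [this]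
            simp
          omega)
      have hzero : (p (α i) : ℕ) = 0 := by
        have := hmin (p.symm ⟨0, hM0⟩) (by simp)
        simp at this
        omega
      have : rank p (α i) = 1 := by unfold rank; omega
      exact this ▸ Nat.sInf_le ⟨pref, hpi, α, hαRM, rfl⟩
    have h2 : 1 ≤ sInf (outSet p') := by
      have hmem := Nat.sInf_mem (s := outSet p') (hout_ne p')
      exact hout_pos p' _ hmem
    omega
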